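/- arXiv:2101.01772 — 3 statements merged into one kernel-verified Lean document; each statement's English description precedes it below -/
import Mathlib

section
/- Let G be a P_8-free graph, D an efficient dominating set, D_basis ⊆ D nonempty with distance levels N_i. Then N_7 = ∅, i.e., every vertex of G is at distance at most 6 from D_basis. -/
open SimpleGraph

variable {V : Type*}

/-- The closed neighborhood of a vertex. -/
def closedNbhd (G : SimpleGraph V) (v : V) : Set V := insert v (G.neighborSet v)

/-- `D` is an efficient dominating set: every vertex has exactly one `D`-vertex
in its closed neighborhood. -/
def IsEDS (G : SimpleGraph V) (D : Set V) : Prop :=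
  ∀ v : V, ∃! d, d ∈ D ∧ d ∈ closedNbhd G v

/-- The distance (in `ℕ∞`) from a vertex to a set of vertices. -/
noncomputable def distToSet (G : SimpleGraph V) (S : Set V) (v : V) : ℕ∞ :=
  sInf ((fun d => G.edist v d) '' S)

/-- The `i`-th distance level of a vertex set. -/
noncomputable def lvl (G : SimpleGraph V) (S : Set V) (i : ℕ) : Set V :=
  {v | distToSet G S v = (i : ℕ∞)}

/-- `p` is an induced (chordless) path on `k` vertices in `G`. -/
def IsInducedPath (G : SimpleGraph V) {k : ℕ} (p : Fin k → V) : Prop :=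
  Function.Injective p ∧
    ∀ i j : Fin k, G.Adj (p i) (p j) ↔ (i.val + 1 = j.val ∨ j.val + 1 = i.val)

/-- `G` contains no induced path on 8 vertices. -/
def P8Free (G : SimpleGraph V) : Prop := ∀ p : Fin 8 → V, ¬ IsInducedPath G p

/-- `(X, Y)` is a bipartition of `G`. -/
structure Bipartition (G : SimpleGraph V) (X Y : Set V) : Prop where
  union : X ∪ Y = Set.univ
  disj : Disjoint X Y
  adj : ∀ ⦃u v : V⦄, G.Adj u v → (u ∈ X ∧ v ∈ Y) ∨ (u ∈ Y ∧ v ∈ X)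


private lemma dist_getVert_le' {V : Type*} {G : SimpleGraph V} (hconn : G.Connected)
    {u v : V} (w : G.Walk u v) :
    ∀ i j : ℕ, i ≤ j → G.dist (w.getVert i) (w.getVert j) ≤ j - i := by
  intro i j
  induction j with
  | zero => intro h; interval_cases i; simp [SimpleGraph.dist_self]
  | succ k ih =>
    intro h
    rcases Nat.lt_or_ge i (k+1) with hlt | hge
    · have hik : i ≤ k := Nat.lt_succ_iff.mp hlt
      have h1 : G.dist (w.getVert k) (w.getVert (k+1)) ≤ 1 := by
        rcases Nat.lt_or_ge k w.length with hk | hk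
        · exact le_of_eq (SimpleGraph.dist_eq_one_iff_adj.mpr (w.adj_getVert_succ hk))
        · rw [w.getVert_of_length_le hk, w.getVert_of_length_le (le_trans hk (Nat.le_succ k))]
          simp [SimpleGraph.dist_self]
      calc G.dist (w.getVert i) (w.getVert (k+1))
          ≤ G.dist (w.getVert i) (w.getVert k) + G.dist (w.getVert k) (w.getVert (k+1)) :=
            hconn.dist_triangle
        _ ≤ (k - i) + 1 := Nat.add_le_add (ih hik) h1
        _ ≤ (k+1) - i := by omega
    · have : i = k + 1 := by omega
      subst this; simp [SimpleGraph.dist_self]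

private lemma dist_getVert_eq' {V : Type*} {G : SimpleGraph V} (hconn : G.Connected)
    {u v : V} (w : G.Walk u v) (hlen : w.length = G.dist u v)
    {i j : ℕ} (hij : i ≤ j) (hj : j ≤ w.length) :
    G.dist (w.getVert i) (w.getVert j) = j - i := by
  have hle := dist_getVert_le' hconn w i j hij
  have h1 : G.dist u (w.getVert i) ≤ i := by
    have := dist_getVert_le' hconn w 0 i (Nat.zero_le i)
    simpa [w.getVert_zero] using this
  have h2 : G.dist (w.getVert j) v ≤ w.length - j := by
    have := dist_getVert_le' hconn w j w.length hj
    simpa [w.getVert_length] using this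
  have htri : G.dist u v ≤ G.dist u (w.getVert i) + G.dist (w.getVert i) (w.getVert j)
      + G.dist (w.getVert j) v :=
    le_trans hconn.dist_triangle (Nat.add_le_add_right hconn.dist_triangle _)
  omega

/-- in a connected `P₈`-free graph with e.d.s. `D` and
`D_basis ⊆ D` nonempty, `N₇ = ∅`, i.e. every vertex is at distance at most 6
from `D_basis`. -/
theorem stmt_6 [Fintype V] (G : SimpleGraph V) (hconn : G.Connected)
    (hP8 : P8Free G) (D Dbasis : Set V) (hD : IsEDS G D)
    (hsub : Dbasis ⊆ D) (hne : Dbasis.Nonempty) :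
    ∀ v : V, distToSet G Dbasis v ≤ 6 := by
  intro v
  obtain ⟨d, hd⟩ := hne
  have hmem : G.edist v d ∈ ((fun d => G.edist v d) '' Dbasis) := ⟨d, hd, rfl⟩
  refine le_trans (sInf_le hmem) ?_
  have hreach : G.Reachable v d := hconn v d
  have hcoe : G.edist v d = (G.dist v d : ℕ∞) := by
    rw [SimpleGraph.dist, ENat.coe_toNat (SimpleGraph.edist_ne_top_iff_reachable.mpr hreach)]
  rw [hcoe]
  have hdist : G.dist v d ≤ 6 := by
    by_contra hgt
    push_neg at hgt
    obtain ⟨w, hw⟩ := hreach.exists_walk_length_eq_dist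
    have hlen7 : 7 ≤ w.length := by omega
    set p : Fin 8 → V := fun i => w.getVert i with hp
    apply hP8 p
    have key : ∀ i j : Fin 8, i.val ≤ j.val → G.dist (p i) (p j) = j.val - i.val := by
      intro i j hij
      exact dist_getVert_eq' hconn w hw hij (by omega)
    have keyd : ∀ i j : Fin 8, G.dist (p i) (p j) = max i.val j.val - min i.val j.val := by
      intro i j
      rcases Nat.le_total i.val j.val with h | h
      · rw [key i j h]; omega
      · rw [SimpleGraph.dist_comm, key j i h]; omega
    constructor
    · intro i j hijp
      by_contra hne
      have : G.dist (p i) (p j) = 0 := by rw [hijp]; simp [SimpleGraph.dist_self]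
      rw [keyd] at this
      have : i.val = j.val := by
        have := Fin.val_ne_of_ne hne
        omega
      exact hne (Fin.ext this)
    · intro i j
      constructor
      · intro hadj
        have := (SimpleGraph.dist_eq_one_iff_adj).mpr hadj
        rw [keyd] at this
        omega
      · intro hor
        rcases hor with h | h
        · have : i.val < w.length := by omega
          have := w.adj_getVert_succ this
          simpa [hp, h] using this
        · have : j.val < w.length := by omega
          have := w.adj_getVert_succ this
          exact (by simpa [hp, h] using this : G.Adj (p j) (p i)).symm
  exact_mod_cast hdist
end

section
/- Let G be a P_8-free bipartite graph with an efficient dominating set D and distance levels N_i of a nonempty D_basis ⊆ D. Suppose every vertex of N_2 is an endpoint of an induced P_5 whose remaining vertices are in N_0 ∪ N_1. Then N_5 = ∅, the set N_4 is independent, and no edge with both endpoints in N_3 has an endpoint adjacent to a vertex of N_4. -/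
open SimpleGraph

variable {V : Type*}

/-! ### Auxiliary lemmas -/

section Aux

variable {G : SimpleGraph V} {S : Set V}

lemma distToSet_le {v d : V} (hd : d ∈ S) : distToSet G S v ≤ G.edist v d :=
  sInf_le ⟨d, hd, rfl⟩

lemma exists_edist_eq {v : V} {i : ℕ} (h : v ∈ lvl G S i) :
    ∃ d ∈ S, G.edist v d = (i : ℕ∞) := by
  have h' : distToSet G S v = (i : ℕ∞) := h
  have hne : ((fun d => G.edist v d) '' S).Nonempty := by
    by_contra hc
    rw [Set.not_nonempty_iff_eq_empty] at hc
    rw [distToSet, hc, sInf_empty] at h'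
    simp at h'
  have hmem := csInf_mem hne
  have hmem2 : ((i : ℕ∞)) ∈ ((fun d => G.edist v d) '' S) := by
    rw [← h']; exact hmem
  obtain ⟨d, hdS, hd⟩ := hmem2
  exact ⟨d, hdS, hd⟩

lemma distToSet_le_adj (hS : S.Nonempty) {v u : V} (h : G.Adj v u) :
    distToSet G S v ≤ distToSet G S u + 1 := by
  have hne : ((fun d => G.edist u d) '' S).Nonempty := hS.image _
  obtain ⟨d, hdS, hd⟩ := csInf_mem hne
  calc distToSet G S v ≤ G.edist v d := distToSet_le hdS
    _ ≤ G.edist v u + G.edist u d := SimpleGraph.edist_triangle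
    _ = 1 + distToSet G S u := by
        rw [SimpleGraph.edist_eq_one_iff_adj.mpr h]
        exact congrArg (HAdd.hAdd 1) hd
    _ = distToSet G S u + 1 := add_comm _ _

lemma lvl_adj_le {u v : V} {i j : ℕ} (hu : u ∈ lvl G S i) (hv : v ∈ lvl G S j)
    (h : G.Adj u v) : j ≤ i + 1 := by
  obtain ⟨d, hdS, hd⟩ := exists_edist_eq hu
  have hv' : distToSet G S v = (j : ℕ∞) := hv
  have h1 : distToSet G S v ≤ (i : ℕ∞) + 1 := by
    calc distToSet G S v ≤ G.edist v d := distToSet_le hdS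
      _ ≤ G.edist v u + G.edist u d := SimpleGraph.edist_triangle
      _ = 1 + (i : ℕ∞) := by rw [hd, SimpleGraph.edist_eq_one_iff_adj.mpr h.symm]
      _ = (i : ℕ∞) + 1 := add_comm _ _
  rw [hv'] at h1
  exact_mod_cast h1

lemma lvl_not_adj {u v : V} {i j : ℕ} (hu : u ∈ lvl G S i) (hv : v ∈ lvl G S j)
    (h : i + 1 < j) : ¬ G.Adj u v :=
  fun ha => absurd (lvl_adj_le hu hv ha) (by omega)

lemma lvl_ne {u v : V} {i j : ℕ} (hu : u ∈ lvl G S i) (hv : v ∈ lvl G S j)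
    (h : i ≠ j) : u ≠ v := by
  intro he
  have hu' : distToSet G S u = (i : ℕ∞) := hu
  have hv' : distToSet G S v = (j : ℕ∞) := hv
  rw [he] at hu'
  rw [hu'] at hv'
  exact h (by exact_mod_cast hv')

lemma lvl_down {v : V} {i : ℕ} (hv : v ∈ lvl G S (i + 1)) :
    ∃ u, u ∈ lvl G S i ∧ G.Adj v u := by
  obtain ⟨d, hdS, hvd⟩ := exists_edist_eq hv
  obtain ⟨W, hW⟩ := SimpleGraph.exists_walk_of_edist_eq_coe hvd
  cases W with
  | nil => simp at hW
  | cons h W' =>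
    rename_i u
    rw [SimpleGraph.Walk.length_cons] at hW
    have hlen : W'.length = i := by omega
    have h1 : G.edist u d ≤ (i : ℕ∞) := by
      calc G.edist u d ≤ (W'.length : ℕ∞) := SimpleGraph.edist_le W'
        _ = (i : ℕ∞) := by rw [hlen]
    have h2 : distToSet G S u ≤ (i : ℕ∞) := le_trans (distToSet_le hdS) h1
    have h3 : distToSet G S v ≤ distToSet G S u + 1 := distToSet_le_adj ⟨d, hdS⟩ h
    have hv' : distToSet G S v = ((i + 1 : ℕ) : ℕ∞) := hv
    rw [hv'] at h3
    have h3' : (i : ℕ∞) + 1 ≤ distToSet G S u + 1 := by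
      refine le_trans (le_of_eq ?_) h3
      push_cast
      ring
    have h4 : (i : ℕ∞) ≤ distToSet G S u :=
      (WithTop.add_le_add_iff_right (by simp : (1 : ℕ∞) ≠ ⊤)).mp h3'
    exact ⟨u, le_antisymm h2 h4, h⟩

lemma no_tri {X Y : Set V} (hbip : Bipartition G X Y) {a b c : V}
    (h1 : G.Adj a b) (h2 : G.Adj b c) (h3 : G.Adj a c) : False := by
  have hd := Set.disjoint_left.mp hbip.disj
  rcases hbip.adj h1 with ⟨ha, hb⟩ | ⟨ha, hb⟩ <;>
    rcases hbip.adj h2 with ⟨hb', hc⟩ | ⟨hb', hc⟩ <;>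
      rcases hbip.adj h3 with ⟨ha', hc'⟩ | ⟨ha', hc'⟩ <;>
        first
          | exact hd ha ha' | exact hd ha' ha
          | exact hd hb hb' | exact hd hb' hb
          | exact hd hc hc' | exact hd hc' hc

lemma snoc_val {n : ℕ} {α : Type*} (p : Fin n → α) (w : α) (i : Fin (n + 1))
    (h : i.val < n) : (Fin.snoc p w : Fin (n + 1) → α) i = p ⟨i.val, h⟩ := by
  obtain ⟨j, rfl⟩ : ∃ j : Fin n, i = Fin.castSucc j := ⟨⟨i.val, h⟩, Fin.ext rfl⟩
  rw [Fin.snoc_castSucc]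
  exact congrArg p (Fin.ext rfl)

lemma IsInducedPath.snocP {n : ℕ} {p : Fin (n + 1) → V}
    (hp : IsInducedPath G p) {w : V}
    (hadj : G.Adj (p (Fin.last n)) w)
    (hnadj : ∀ i : Fin (n + 1), i.val < n → ¬ G.Adj (p i) w)
    (hne : ∀ i, p i ≠ w) :
    IsInducedPath G (Fin.snoc p w) := by
  constructor
  · intro i j hij
    induction i using Fin.lastCases with
    | last =>
      induction j using Fin.lastCases with
      | last => rfl
      | cast j' =>
        rw [Fin.snoc_last, Fin.snoc_castSucc] at hij
        exact absurd hij.symm (hne j')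
    | cast i' =>
      induction j using Fin.lastCases with
      | last =>
        rw [Fin.snoc_last, Fin.snoc_castSucc] at hij
        exact absurd hij (hne i')
      | cast j' =>
        rw [Fin.snoc_castSucc, Fin.snoc_castSucc] at hij
        exact congrArg Fin.castSucc (hp.1 hij)
  · intro i j
    induction i using Fin.lastCases with
    | last =>
      induction j using Fin.lastCases with
      | last =>
        rw [Fin.snoc_last]
        exact iff_of_false (G.irrefl) (by
          show ¬(n + 1 + 1 = n + 1 ∨ n + 1 + 1 = n + 1); omega)
      | cast j' =>
        rw [Fin.snoc_last, Fin.snoc_castSucc]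
        show G.Adj w (p j') ↔ (n + 1 + 1 = j'.val ∨ j'.val + 1 = n + 1)
        by_cases h : j'.val = n
        · have hj : j' = Fin.last n := Fin.ext h
          refine iff_of_true ?_ (Or.inr (by omega))
          rw [hj]; exact hadj.symm
        · have hlt : j'.val < n := lt_of_le_of_ne (Fin.is_le j') h
          exact iff_of_false (fun ha => hnadj j' hlt ha.symm) (by omega)
    | cast i' =>
      induction j using Fin.lastCases with
      | last =>
        rw [Fin.snoc_castSucc, Fin.snoc_last]
        show G.Adj (p i') w ↔ (i'.val + 1 = n + 1 ∨ n + 1 + 1 = i'.val)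
        by_cases h : i'.val = n
        · have hi : i' = Fin.last n := Fin.ext h
          refine iff_of_true ?_ (Or.inl (by omega))
          rw [hi]; exact hadj
        · have hlt : i'.val < n := lt_of_le_of_ne (Fin.is_le i') h
          exact iff_of_false (hnadj i' hlt) (by omega)
      | cast j' =>
        rw [Fin.snoc_castSucc, Fin.snoc_castSucc]
        exact hp.2 i' j'

/-- The key construction: an induced `P₅` ending in `N₂` cannot be extended by
three more vertices `x, y, z` (at levels `3`, `ky ≥ 3`, `kz ≥ 4`) forming an
induced path, in a `P₈`-free graph. -/
lemma no_such (hP8 : P8Free G)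
    (hP5 : ∀ u ∈ lvl G S 2, ∃ p : Fin 5 → V, IsInducedPath G p ∧
        p 4 = u ∧ ∀ i : Fin 5, i.val ≤ 3 → p i ∈ lvl G S 0 ∪ lvl G S 1)
    {v2 x y z : V} {ky kz : ℕ} (hky : 3 ≤ ky) (hkz : 4 ≤ kz)
    (hv2 : v2 ∈ lvl G S 2) (hx : x ∈ lvl G S 3) (hy : y ∈ lvl G S ky)
    (hz : z ∈ lvl G S kz)
    (a1 : G.Adj v2 x) (a2 : G.Adj x y) (a3 : G.Adj y z)
    (n1 : ¬ G.Adj v2 y) (n3 : ¬ G.Adj x z) : False := by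
  obtain ⟨p, hp, hp4, hmem⟩ := hP5 v2 hv2
  have hples : ∀ i : Fin 5, i.val ≤ 3 → ∃ k ≤ 1, p i ∈ lvl G S k := by
    intro i hi
    rcases hmem i hi with h | h
    · exact ⟨0, by norm_num, h⟩
    · exact ⟨1, le_refl 1, h⟩
  have key : ∀ (u : V) (m : ℕ), 3 ≤ m → u ∈ lvl G S m →
      (∀ i : Fin 5, i.val ≤ 3 → ¬ G.Adj (p i) u) ∧
        (∀ i : Fin 5, i.val ≤ 3 → p i ≠ u) ∧ v2 ≠ u := by
    intro u m hm hu
    refine ⟨?_, ?_, lvl_ne hv2 hu (by omega)⟩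
    · intro i hi
      obtain ⟨k, hk, hpk⟩ := hples i hi
      exact lvl_not_adj hpk hu (by omega)
    · intro i hi
      obtain ⟨k, hk, hpk⟩ := hples i hi
      exact lvl_ne hpk hu (by omega)
  obtain ⟨nx, dx, dvx⟩ := key x 3 le_rfl hx
  obtain ⟨ny, dy, dvy⟩ := key y ky hky hy
  obtain ⟨nz, dz, dvz⟩ := key z kz (by omega) hz
  -- step 1 : P₆ ending at x
  have h6 : IsInducedPath G (Fin.snoc p x : Fin 6 → V) := by
    refine hp.snocP ?_ ?_ ?_
    · have : Fin.last 4 = (4 : Fin 5) := rfl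
      rw [this, hp4]; exact a1
    · intro i hi; exact nx i (by omega)
    · intro i
      by_cases hi : i.val ≤ 3
      · exact dx i hi
      · have h4 : i = (4 : Fin 5) := Fin.ext (by
          have := i.isLt; show i.val = 4; omega)
        rw [h4, hp4]; exact dvx
  -- generic facts about values of `Fin.snoc p x`
  have q6fact : ∀ u : V, (∀ i : Fin 5, i.val ≤ 3 → ¬ G.Adj (p i) u) → ¬ G.Adj v2 u →
      ∀ i : Fin 6, i.val < 5 → ¬ G.Adj ((Fin.snoc p x : Fin 6 → V) i) u := by
    intro u h1 h2 i hi
    rw [snoc_val p x i hi]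
    by_cases h3 : i.val ≤ 3
    · exact h1 _ h3
    · have h4 : (⟨i.val, hi⟩ : Fin 5) = (4 : Fin 5) := Fin.ext (by
        show i.val = 4; omega)
      rw [h4, hp4]; exact h2
  have q6ne : ∀ u : V, (∀ i : Fin 5, i.val ≤ 3 → p i ≠ u) → v2 ≠ u → x ≠ u →
      ∀ i : Fin 6, (Fin.snoc p x : Fin 6 → V) i ≠ u := by
    intro u h1 h2 h3 i
    by_cases hi : i.val < 5
    · rw [snoc_val p x i hi]
      by_cases h4 : i.val ≤ 3
      · exact h1 _ h4
      · have h5 : (⟨i.val, hi⟩ : Fin 5) = (4 : Fin 5) := Fin.ext (by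
          show i.val = 4; omega)
        rw [h5, hp4]; exact h2
    · have h5 : i = Fin.last 5 := Fin.ext (by
        have := i.isLt; show i.val = 5; omega)
      rw [h5, Fin.snoc_last]; exact h3
  -- step 2 : P₇ ending at y
  have h7 : IsInducedPath G (Fin.snoc (Fin.snoc p x) y : Fin 7 → V) := by
    refine h6.snocP ?_ (q6fact y ny n1) (q6ne y dy dvy a2.ne)
    rw [Fin.snoc_last]; exact a2
  -- facts about values of the P₇ w.r.t. `z`
  have q7nadj : ∀ i : Fin 7, i.val < 6 → ¬ G.Adj ((Fin.snoc (Fin.snoc p x) y : Fin 7 → V) i) z := by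
    intro i hi
    rw [snoc_val _ y i hi]
    by_cases h5 : i.val < 5
    · exact q6fact z nz (lvl_not_adj hv2 hz (by omega)) ⟨i.val, hi⟩ h5
    · have h6' : (⟨i.val, hi⟩ : Fin 6) = Fin.last 5 := Fin.ext (by
        show i.val = 5; omega)
      rw [h6', Fin.snoc_last]
      exact n3
  have q7ne : ∀ i : Fin 7, (Fin.snoc (Fin.snoc p x) y : Fin 7 → V) i ≠ z := by
    intro i
    by_cases hi : i.val < 6
    · rw [snoc_val _ y i hi]
      exact q6ne z dz dvz (lvl_ne hx hz (by omega)) ⟨i.val, hi⟩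
    · have h6' : i = Fin.last 6 := Fin.ext (by
        have := i.isLt; show i.val = 6; omega)
      rw [h6', Fin.snoc_last]
      exact a3.ne
  -- step 3 : P₈ ending at z
  have h8 : IsInducedPath G (Fin.snoc (Fin.snoc (Fin.snoc p x) y) z : Fin 8 → V) := by
    refine h7.snocP ?_ q7nadj q7ne
    rw [Fin.snoc_last]; exact a3
  exact hP8 _ h8

end Aux

/-- if every vertex of `N₂` is the endpoint of an induced `P₅`
whose remaining vertices are in `N₀ ∪ N₁`, then `N₅ = ∅`, `N₄` is independent,
and no edge inside `N₃` contacts `N₄`. -/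
theorem stmt_9 [Fintype V] (G : SimpleGraph V) (X Y : Set V)
    (hbip : Bipartition G X Y) (hP8 : P8Free G)
    (D Dbasis : Set V) (hD : IsEDS G D) (hsub : Dbasis ⊆ D)
    (hne : Dbasis.Nonempty)
    (hP5 : ∀ u ∈ lvl G Dbasis 2, ∃ p : Fin 5 → V, IsInducedPath G p ∧
        p 4 = u ∧ ∀ i : Fin 5, i.val ≤ 3 → p i ∈ lvl G Dbasis 0 ∪ lvl G Dbasis 1) :
    lvl G Dbasis 5 = ∅ ∧
      (∀ a b : V, a ∈ lvl G Dbasis 4 → b ∈ lvl G Dbasis 4 → ¬ G.Adj a b) ∧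
      (∀ a b c : V, a ∈ lvl G Dbasis 3 → b ∈ lvl G Dbasis 3 → G.Adj a b →
        c ∈ lvl G Dbasis 4 → ¬ G.Adj a c) := by
  refine ⟨?_, ?_, ?_⟩
  · -- N₅ = ∅
    ext v5
    simp only [Set.mem_empty_iff_false, iff_false]
    intro hv5
    obtain ⟨v4, hv4, a54⟩ := lvl_down (show v5 ∈ lvl G Dbasis (4 + 1) from hv5)
    obtain ⟨v3, hv3, a43⟩ := lvl_down (show v4 ∈ lvl G Dbasis (3 + 1) from hv4)
    obtain ⟨v2, hv2, a32⟩ := lvl_down (show v3 ∈ lvl G Dbasis (2 + 1) from hv3)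
    exact no_such hP8 hP5 (by norm_num) (by norm_num) hv2 hv3 hv4 hv5
      a32.symm a43.symm a54.symm
      (lvl_not_adj hv2 hv4 (by norm_num))
      (lvl_not_adj hv3 hv5 (by norm_num))
  · -- N₄ independent
    intro a b ha hb hab
    obtain ⟨v3, hv3, a43⟩ := lvl_down (show a ∈ lvl G Dbasis (3 + 1) from ha)
    obtain ⟨v2, hv2, a32⟩ := lvl_down (show v3 ∈ lvl G Dbasis (2 + 1) from hv3)
    exact no_such hP8 hP5 (by norm_num) (by norm_num) hv2 hv3 ha hb
      a32.symm a43.symm hab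
      (lvl_not_adj hv2 ha (by norm_num))
      (fun h => no_tri hbip a43.symm hab h)
  · -- no edge inside N₃ contacts N₄
    intro a b c ha hb hab hc hac
    obtain ⟨v2, hv2, a32⟩ := lvl_down (show b ∈ lvl G Dbasis (2 + 1) from hb)
    exact no_such hP8 hP5 (by norm_num) (by norm_num) hv2 hb ha hc
      a32.symm hab.symm hac
      (fun h => no_tri hbip hab a32 h.symm)
      (fun h => no_tri hbip hab h hac)
end

section
/- Let G be a P_8-free bipartite graph with an efficient dominating set D and distance levels N_i of a nonempty D_basis ⊆ D, and suppose every vertex of N_2 is an endpoint of an induced P_5 whose remaining vertices are in N_0 ∪ N_1. Then for every u ∈ N_2 and every w ∈ N_4 at distance 2 from u, every neighbor of w in N_3 is also a neighbor of u. -/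
open SimpleGraph

variable {V : Type*}

private lemma distToSet_adj_le (G : SimpleGraph V) {S : Set V} (hne : S.Nonempty) {a b : V}
    (h : G.Adj a b) : distToSet G S b ≤ distToSet G S a + 1 := by
  obtain ⟨d, hd, hx⟩ := csInf_mem (hne.image (fun d => G.edist a d))
  calc distToSet G S b ≤ G.edist b d := csInf_le (OrderBot.bddBelow _) ⟨d, hd, rfl⟩
    _ ≤ G.edist b a + G.edist a d := G.edist_triangle
    _ ≤ 1 + G.edist a d := by
        gcongr
        exact le_of_eq (SimpleGraph.edist_eq_one_iff_adj.mpr h.symm)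
    _ = G.edist a d + 1 := by rw [add_comm]
    _ = distToSet G S a + 1 := by rw [distToSet]; exact congrArg (· + 1) hx

private lemma not_adj_of_lvl (G : SimpleGraph V) {S : Set V} (hne : S.Nonempty) {a b : V}
    {m n : ℕ} (ha : a ∈ lvl G S m) (hb : b ∈ lvl G S n) (hmn : m + 2 ≤ n) : ¬ G.Adj a b := by
  intro h
  have h1 := distToSet_adj_le G hne h
  have ha' : distToSet G S a = (m : ℕ∞) := ha
  have hb' : distToSet G S b = (n : ℕ∞) := hb
  rw [ha', hb'] at h1
  have h2 : (n : ℕ∞) ≤ ((m + 1 : ℕ) : ℕ∞) := by push_cast; exact h1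
  have := Nat.cast_le.mp h2
  omega

private lemma ne_of_lvl {G : SimpleGraph V} {S : Set V} {a b : V} {m n : ℕ}
    (ha : a ∈ lvl G S m) (hb : b ∈ lvl G S n) (hmn : m ≠ n) : a ≠ b := by
  rintro rfl
  have ha' : distToSet G S a = (m : ℕ∞) := ha
  have hb' : distToSet G S a = (n : ℕ∞) := hb
  exact hmn (Nat.cast_inj.mp (ha'.symm.trans hb'))

/-- if every vertex of `N₂` is the endpoint of an induced `P₅`
whose remaining vertices are in `N₀ ∪ N₁`, then for every `u ∈ N₂` and
`w ∈ N₄` at distance 2 from `u`, `N(w) ∩ N₃ ⊆ N(u) ∩ N₃`. -/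
theorem stmt_10 [Fintype V] (G : SimpleGraph V) (X Y : Set V)
    (hbip : Bipartition G X Y) (hP8 : P8Free G)
    (D Dbasis : Set V) (hD : IsEDS G D) (hsub : Dbasis ⊆ D)
    (hne : Dbasis.Nonempty)
    (hP5 : ∀ u ∈ lvl G Dbasis 2, ∃ p : Fin 5 → V, IsInducedPath G p ∧
        p 4 = u ∧ ∀ i : Fin 5, i.val ≤ 3 → p i ∈ lvl G Dbasis 0 ∪ lvl G Dbasis 1)
    {u w : V} (hu : u ∈ lvl G Dbasis 2) (hw : w ∈ lvl G Dbasis 4)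
    (hdist : G.dist u w = 2) :
    ∀ v ∈ lvl G Dbasis 3, G.Adj w v → G.Adj u v := by
  intro v hv hwv
  by_contra huv
  -- extract a common neighbor x of u and w
  have hdz : G.dist u w ≠ 0 := by omega
  obtain ⟨pw, hpw⟩ := SimpleGraph.exists_walk_of_dist_ne_zero hdz
  rw [hdist] at hpw
  cases pw with
  | nil => simp at hpw
  | cons hux q =>
    rename_i x
    cases q with
    | nil => simp at hpw
    | cons hxc r =>
      rename_i c
      simp only [SimpleGraph.Walk.length_cons] at hpw
      have hcw : c = w := SimpleGraph.Walk.eq_of_length_eq_zero (p := r) (by omega)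
      have hxw : G.Adj x w := hcw ▸ hxc
      -- x is in level 3
      have hu' : distToSet G Dbasis u = ((2 : ℕ) : ℕ∞) := hu
      have hw' : distToSet G Dbasis w = ((4 : ℕ) : ℕ∞) := hw
      have hxle : distToSet G Dbasis x ≤ ((2 : ℕ) : ℕ∞) + 1 := by
        have := distToSet_adj_le G hne hux
        rwa [hu'] at this
      have hxge : ((4 : ℕ) : ℕ∞) ≤ distToSet G Dbasis x + 1 := by
        have := distToSet_adj_le G hne hxw
        rwa [hw'] at this
      have hxle' : distToSet G Dbasis x ≤ ((3 : ℕ) : ℕ∞) := by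
        refine le_trans hxle (le_of_eq ?_)
        push_cast
        rfl
      have hxtop : distToSet G Dbasis x ≠ ⊤ :=
        ne_top_of_le_ne_top (WithTop.coe_ne_top) hxle'
      obtain ⟨t, ht⟩ := Option.ne_none_iff_exists'.mp hxtop
      have ht' : distToSet G Dbasis x = (t : ℕ∞) := by exact_mod_cast ht
      rw [ht'] at hxle' hxge
      have ht3 : t = 3 := by
        have h1 := Nat.cast_le.mp hxle'
        have h2 : ((4 : ℕ) : ℕ∞) ≤ ((t + 1 : ℕ) : ℕ∞) := by push_cast at hxge ⊢; exact hxge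
        have := Nat.cast_le.mp h2
        omega
      subst ht3
      have hx3 : x ∈ lvl G Dbasis 3 := ht'
      -- x is not adjacent to v (bipartiteness: both are neighbors of w)
      have hxv : ¬ G.Adj x v := by
        intro h
        rcases hbip.adj hxw with ⟨hx1, hw1⟩ | ⟨hx1, hw1⟩ <;>
          rcases hbip.adj hwv with ⟨hw2, hv2⟩ | ⟨hw2, hv2⟩ <;>
          rcases hbip.adj h with ⟨hx2, hv3⟩ | ⟨hx2, hv3⟩ <;>
          first
            | exact Set.disjoint_left.mp hbip.disj hx1 hx2
            | exact Set.disjoint_left.mp hbip.disj hx2 hx1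
            | exact Set.disjoint_left.mp hbip.disj hw1 hw2
            | exact Set.disjoint_left.mp hbip.disj hw2 hw1
            | exact Set.disjoint_left.mp hbip.disj hv2 hv3
            | exact Set.disjoint_left.mp hbip.disj hv3 hv2
      -- get the induced P5 ending at u
      obtain ⟨p, hp, hp4, hlev⟩ := hP5 u hu
      -- adjacency facts
      have a01 : G.Adj (p 0) (p 1) := (hp.2 0 1).mpr (by decide)
      have a12 : G.Adj (p 1) (p 2) := (hp.2 1 2).mpr (by decide)
      have a23 : G.Adj (p 2) (p 3) := (hp.2 2 3).mpr (by decide)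
      have a34 : G.Adj (p 3) u := by
        have := (hp.2 3 4).mpr (by decide); rwa [hp4] at this
      have a10 := a01.symm
      have a21 := a12.symm
      have a32 := a23.symm
      have a43 := a34.symm
      have aux := hux
      have axu := hux.symm
      have axw := hxw
      have awx := hxw.symm
      have awv := hwv
      have avw := hwv.symm
      -- non-adjacency within the P5
      have n02 : ¬ G.Adj (p 0) (p 2) := fun h => absurd ((hp.2 0 2).mp h) (by decide)
      have n03 : ¬ G.Adj (p 0) (p 3) := fun h => absurd ((hp.2 0 3).mp h) (by decide)
      have n13 : ¬ G.Adj (p 1) (p 3) := fun h => absurd ((hp.2 1 3).mp h) (by decide)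
      have n04 : ¬ G.Adj (p 0) u := by
        rw [← hp4]; exact fun h => absurd ((hp.2 0 4).mp h) (by decide)
      have n14 : ¬ G.Adj (p 1) u := by
        rw [← hp4]; exact fun h => absurd ((hp.2 1 4).mp h) (by decide)
      have n24 : ¬ G.Adj (p 2) u := by
        rw [← hp4]; exact fun h => absurd ((hp.2 2 4).mp h) (by decide)
      have n20 : ¬ G.Adj (p 2) (p 0) := fun h => n02 h.symm
      have n30 : ¬ G.Adj (p 3) (p 0) := fun h => n03 h.symm
      have n31 : ¬ G.Adj (p 3) (p 1) := fun h => n13 h.symm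
      have n40 : ¬ G.Adj u (p 0) := fun h => n04 h.symm
      have n41 : ¬ G.Adj u (p 1) := fun h => n14 h.symm
      have n42 : ¬ G.Adj u (p 2) := fun h => n24 h.symm
      -- non-adjacency between P5 vertices (levels 0,1) and x, w, v (levels 3,4,3)
      have hcross : ∀ i : Fin 5, i.val ≤ 3 → ∀ b : V, ∀ n : ℕ,
          b ∈ lvl G Dbasis n → 3 ≤ n → ¬ G.Adj (p i) b := by
        intro i hi b n hb hn
        rcases hlev i hi with h0 | h1
        · exact not_adj_of_lvl G hne h0 hb (by omega)
        · exact not_adj_of_lvl G hne h1 hb (by omega)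
      have n0x : ¬ G.Adj (p 0) x := hcross 0 (by decide) x 3 hx3 (by omega)
      have n1x : ¬ G.Adj (p 1) x := hcross 1 (by decide) x 3 hx3 (by omega)
      have n2x : ¬ G.Adj (p 2) x := hcross 2 (by decide) x 3 hx3 (by omega)
      have n3x : ¬ G.Adj (p 3) x := hcross 3 (by decide) x 3 hx3 (by omega)
      have n0w : ¬ G.Adj (p 0) w := hcross 0 (by decide) w 4 hw (by omega)
      have n1w : ¬ G.Adj (p 1) w := hcross 1 (by decide) w 4 hw (by omega)
      have n2w : ¬ G.Adj (p 2) w := hcross 2 (by decide) w 4 hw (by omega)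
      have n3w : ¬ G.Adj (p 3) w := hcross 3 (by decide) w 4 hw (by omega)
      have n0v : ¬ G.Adj (p 0) v := hcross 0 (by decide) v 3 hv (by omega)
      have n1v : ¬ G.Adj (p 1) v := hcross 1 (by decide) v 3 hv (by omega)
      have n2v : ¬ G.Adj (p 2) v := hcross 2 (by decide) v 3 hv (by omega)
      have n3v : ¬ G.Adj (p 3) v := hcross 3 (by decide) v 3 hv (by omega)
      have nx0 : ¬ G.Adj x (p 0) := fun h => n0x h.symm
      have nx1 : ¬ G.Adj x (p 1) := fun h => n1x h.symm
      have nx2 : ¬ G.Adj x (p 2) := fun h => n2x h.symm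
      have nx3 : ¬ G.Adj x (p 3) := fun h => n3x h.symm
      have nw0 : ¬ G.Adj w (p 0) := fun h => n0w h.symm
      have nw1 : ¬ G.Adj w (p 1) := fun h => n1w h.symm
      have nw2 : ¬ G.Adj w (p 2) := fun h => n2w h.symm
      have nw3 : ¬ G.Adj w (p 3) := fun h => n3w h.symm
      have nv0 : ¬ G.Adj v (p 0) := fun h => n0v h.symm
      have nv1 : ¬ G.Adj v (p 1) := fun h => n1v h.symm
      have nv2 : ¬ G.Adj v (p 2) := fun h => n2v h.symm
      have nv3 : ¬ G.Adj v (p 3) := fun h => n3v h.symm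
      -- non-adjacency among u, x, w, v
      have nuw : ¬ G.Adj u w := not_adj_of_lvl G hne hu hw (by omega)
      have nwu : ¬ G.Adj w u := fun h => nuw h.symm
      have nuv : ¬ G.Adj u v := huv
      have nvu : ¬ G.Adj v u := fun h => huv h.symm
      have nvx : ¬ G.Adj v x := fun h => hxv h.symm
      -- loops
      have l0 : ¬ G.Adj (p 0) (p 0) := G.irrefl
      have l1 : ¬ G.Adj (p 1) (p 1) := G.irrefl
      have l2 : ¬ G.Adj (p 2) (p 2) := G.irrefl
      have l3 : ¬ G.Adj (p 3) (p 3) := G.irrefl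
      have lu : ¬ G.Adj u u := G.irrefl
      have lx : ¬ G.Adj x x := G.irrefl
      have lw : ¬ G.Adj w w := G.irrefl
      have lv : ¬ G.Adj v v := G.irrefl
      -- distinctness facts
      have pne : ∀ i j : Fin 5, i ≠ j → p i ≠ p j := fun i j hij h => hij (hp.1 h)
      have e01 : p 0 ≠ p 1 := pne 0 1 (by decide)
      have e02 : p 0 ≠ p 2 := pne 0 2 (by decide)
      have e03 : p 0 ≠ p 3 := pne 0 3 (by decide)
      have e12 : p 1 ≠ p 2 := pne 1 2 (by decide)
      have e13 : p 1 ≠ p 3 := pne 1 3 (by decide)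
      have e23 : p 2 ≠ p 3 := pne 2 3 (by decide)
      have e0u : p 0 ≠ u := by rw [← hp4]; exact pne 0 4 (by decide)
      have e1u : p 1 ≠ u := by rw [← hp4]; exact pne 1 4 (by decide)
      have e2u : p 2 ≠ u := by rw [← hp4]; exact pne 2 4 (by decide)
      have e3u : p 3 ≠ u := by rw [← hp4]; exact pne 3 4 (by decide)
      have ecross : ∀ i : Fin 5, i.val ≤ 3 → ∀ b : V, ∀ n : ℕ,
          b ∈ lvl G Dbasis n → 2 ≤ n → p i ≠ b := by
        intro i hi b n hb hn
        rcases hlev i hi with h0 | h1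
        · exact ne_of_lvl h0 hb (by omega)
        · exact ne_of_lvl h1 hb (by omega)
      have e0x : p 0 ≠ x := ecross 0 (by decide) x 3 hx3 (by omega)
      have e1x : p 1 ≠ x := ecross 1 (by decide) x 3 hx3 (by omega)
      have e2x : p 2 ≠ x := ecross 2 (by decide) x 3 hx3 (by omega)
      have e3x : p 3 ≠ x := ecross 3 (by decide) x 3 hx3 (by omega)
      have e0w : p 0 ≠ w := ecross 0 (by decide) w 4 hw (by omega)
      have e1w : p 1 ≠ w := ecross 1 (by decide) w 4 hw (by omega)
      have e2w : p 2 ≠ w := ecross 2 (by decide) w 4 hw (by omega)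
      have e3w : p 3 ≠ w := ecross 3 (by decide) w 4 hw (by omega)
      have e0v : p 0 ≠ v := ecross 0 (by decide) v 3 hv (by omega)
      have e1v : p 1 ≠ v := ecross 1 (by decide) v 3 hv (by omega)
      have e2v : p 2 ≠ v := ecross 2 (by decide) v 3 hv (by omega)
      have e3v : p 3 ≠ v := ecross 3 (by decide) v 3 hv (by omega)
      have eux : u ≠ x := ne_of_lvl hu hx3 (by omega)
      have euw : u ≠ w := ne_of_lvl hu hw (by omega)
      have euv : u ≠ v := ne_of_lvl hu hv (by omega)
      have exw : x ≠ w := ne_of_lvl hx3 hw (by omega)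
      have ewv : w ≠ v := ne_of_lvl hw hv (by omega)
      have exv : x ≠ v := fun h => huv (h ▸ hux)
      have e10 := e01.symm; have e20 := e02.symm; have e30 := e03.symm
      have e21 := e12.symm; have e31 := e13.symm; have e32 := e23.symm
      have eu0 := e0u.symm; have eu1 := e1u.symm; have eu2 := e2u.symm; have eu3 := e3u.symm
      have ex0 := e0x.symm; have ex1 := e1x.symm; have ex2 := e2x.symm; have ex3 := e3x.symm
      have ew0 := e0w.symm; have ew1 := e1w.symm; have ew2 := e2w.symm; have ew3 := e3w.symm
      have ev0 := e0v.symm; have ev1 := e1v.symm; have ev2 := e2v.symm; have ev3 := e3v.symm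
      have exu := eux.symm; have ewu := euw.symm; have evu := euv.symm
      have ewx := exw.symm; have evw := ewv.symm; have evx := exv.symm
      -- build the induced P8
      refine hP8 ![p 0, p 1, p 2, p 3, u, x, w, v] ⟨?_, ?_⟩
      · intro i j h
        fin_cases i <;> fin_cases j <;> first | rfl | exact absurd h (by assumption)
      · intro i j
        fin_cases i <;> fin_cases j <;>
          first
            | exact iff_of_true (by assumption) (by decide)
            | exact iff_of_false (by assumption) (by decide)
end
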